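/- If the circle plane contains the origin, i.e. c∧I_c = 0 (so c = c∥ lies in the plane of I_c), then V₃ = P₁∧P₂∧P₃ = −(C − (1/2)r²n)·I_c·N, where C = c + (1/2)c²n + n̄ is the conformal center. -/

import Mathlib

noncomputable section
open scoped RealInnerProductSpace

/-- Euclidean 3-space. -/
abbrev E3 : Type := EuclideanSpace ℝ (Fin 3)

/-- The 5-dimensional space ℝ^{4,1}: Euclidean part plus coefficients of the
null vectors n (infinity) and n̄ (origin). -/
abbrev V5 : Type := E3 × ℝ × ℝ

/-- Symmetric bilinear form of signature (4,1):
`⟪p,q⟫` on the Euclidean part, and `n·n̄ = -1` on the null pair. -/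
def B5 : LinearMap.BilinForm ℝ V5 := LinearMap.mk₂ ℝ
  (fun x y => ⟪x.1, y.1⟫ - x.2.1 * y.2.2 - x.2.2 * y.2.1)
  (fun m₁ m₂ y => by simp only [Prod.fst_add, Prod.snd_add, inner_add_left]; ring)
  (fun c m y => by simp only [Prod.smul_fst, Prod.smul_snd, smul_eq_mul, real_inner_smul_left]; ring)
  (fun m y₁ y₂ => by simp only [Prod.fst_add, Prod.snd_add, inner_add_right]; ring)
  (fun c m y => by simp only [Prod.smul_fst, Prod.smul_snd, smul_eq_mul, real_inner_smul_right]; ring)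

/-- The quadratic form of R_{4,1}. -/
def Q5 : QuadraticForm ℝ V5 := B5.toQuadraticMap

/-- The Clifford geometric algebra R_{4,1}. -/
abbrev Cl : Type := CliffordAlgebra Q5

def ι5 : V5 →ₗ[ℝ] Cl := CliffordAlgebra.ι Q5

/-- Embedding of a Euclidean vector as a grade-1 element. -/
def ev (p : E3) : Cl := ι5 (p, 0, 0)

/-- The null vector n representing infinity. -/
def nInf : Cl := ι5 (0, 1, 0)

/-- The null vector n̄ representing the origin. -/
def nOri : Cl := ι5 (0, 0, 1)

/-- The conformal point P = p + (1/2)p² n + n̄. -/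
def cpt (p : E3) : Cl := ι5 (p, ⟪p, p⟫ / 2, 1)

/-- Outer (wedge) product of two vectors (grade-1 elements): antisymmetrized
geometric product. -/
def w2 (a b : Cl) : Cl := (2:ℝ)⁻¹ • (a * b - b * a)

/-- Outer (wedge) product of three vectors. -/
def w3 (a b c : Cl) : Cl := (6:ℝ)⁻¹ •
  (a*b*c - a*c*b - b*a*c + b*c*a + c*a*b - c*b*a)

/-- Outer (wedge) product of a vector with a bivector. -/
def vwB (v B : Cl) : Cl := (2:ℝ)⁻¹ • (v * B + B * v)

/-- Left contraction of a vector into a bivector. -/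
def lcontr (v B : Cl) : Cl := (2:ℝ)⁻¹ • (v * B - B * v)

/-- The Minkowski plane bivector N = n ∧ n̄. -/
def Nb : Cl := w2 nInf nOri

/-! Expanding the wedge of the conformal points `Pᵢ = pᵢ + αᵢ n + n̄`, `αᵢ = pᵢ²/2`, by
trilinearity gives `p₁∧p₂∧p₃ + (Σ ±αᵢ pⱼ∧pₖ) n + I_c n̄ + (Σ (αⱼ - αₖ) pᵢ) N`. Since `c` and `r₁`
lie in the plane, so does `p₁`, and `p₁∧p₂∧p₃ = p₁∧I_c = 0`. On the circle
`αᵢ = c·pᵢ + (r² - c²)/2`, and contracting the vanishing trivector `p₁∧p₂∧p₃` with `c` removes the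
`c·pᵢ` part of the `n`-coefficient, leaving `(r² - c²)/2 · I_c`. The `N`-coefficient is `-c⌋I_c`,
which is `-c I_c` because `c ∧ I_c = 0`. On the other side, `I_c` commutes with `n` and `n̄`, while
`n N = n` and `n̄ N = -n̄`. -/

lemma B5_apply (x y : V5) : B5 x y = ⟪x.1, y.1⟫ - x.2.1 * y.2.2 - x.2.2 * y.2.1 := rfl

lemma ι5_mul_ι5_add_swap (x y : V5) : ι5 x * ι5 y + ι5 y * ι5 x = (2 * B5 x y) • 1 := by
  have hpolar : QuadraticMap.polar Q5 x y = 2 * B5 x y := by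
    rw [Q5, LinearMap.BilinMap.polar_toQuadraticMap, B5_apply, B5_apply, real_inner_comm]
    ring
  rw [ι5, CliffordAlgebra.ι_mul_ι_add_swap, hpolar, Algebra.algebraMap_eq_smul_one]

lemma ι5_mul_self (x : V5) : ι5 x * ι5 x = B5 x x • 1 := by
  rw [ι5, CliffordAlgebra.ι_sq_scalar, Algebra.algebraMap_eq_smul_one]
  rfl

lemma ev_eq (p : E3) : ev p = (ι5 ∘ₗ LinearMap.inl ℝ E3 (ℝ × ℝ)) p := rfl

lemma ev_add (p q : E3) : ev (p + q) = ev p + ev q := by simp only [ev_eq, map_add]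
lemma ev_sub (p q : E3) : ev (p - q) = ev p - ev q := by simp only [ev_eq, map_sub]
lemma ev_smul (t : ℝ) (p : E3) : ev (t • p) = t • ev p := by simp only [ev_eq, map_smul]

lemma ev_mul_ev_add_swap (p q : E3) : ev p * ev q + ev q * ev p = (2 * ⟪p, q⟫) • 1 := by
  simpa [ev, B5_apply] using ι5_mul_ι5_add_swap (p, 0, 0) (q, 0, 0)

lemma nInf_mul_ev_add_swap (p : E3) : nInf * ev p + ev p * nInf = 0 := by
  simpa [ev, nInf, B5_apply] using ι5_mul_ι5_add_swap (0, 1, 0) (p, 0, 0)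

lemma nOri_mul_ev_add_swap (p : E3) : nOri * ev p + ev p * nOri = 0 := by
  simpa [ev, nOri, B5_apply] using ι5_mul_ι5_add_swap (0, 0, 1) (p, 0, 0)

lemma nInf_mul_nOri_add_swap : nInf * nOri + nOri * nInf = (-2 : ℝ) • 1 := by
  simpa [nInf, nOri, B5_apply] using ι5_mul_ι5_add_swap (0, 1, 0) (0, 0, 1)

lemma nInf_mul_self : nInf * nInf = 0 := by
  simpa [nInf, B5_apply] using ι5_mul_self (0, 1, 0)

lemma nOri_mul_self : nOri * nOri = 0 := by
  simpa [nOri, B5_apply] using ι5_mul_self (0, 0, 1)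

lemma cpt_eq (p : E3) : cpt p = ev p + (⟪p, p⟫ / 2) • nInf + nOri := by
  simp only [cpt, ev, nInf, nOri, ← map_smul, ← map_add]
  congr 1
  simp

section Anticommutation

variable {A : Type*} [Ring A] {x y : A}

lemma mul_eq_neg_of_add_eq_zero (h : x * y + y * x = 0) : y * x = -(x * y) :=
  eq_neg_of_add_eq_zero_right h

lemma mul_mul_eq_neg_of_add_eq_zero (h : x * y + y * x = 0) (z : A) :
    y * (x * z) = -(x * (y * z)) := by
  rw [← mul_assoc, mul_eq_neg_of_add_eq_zero h, neg_mul, mul_assoc]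

variable [Algebra ℝ A]

lemma mul_eq_smul_one_sub_of_add_eq {s : ℝ} (h : x * y + y * x = s • 1) :
    y * x = s • 1 - x * y :=
  eq_sub_of_add_eq' h

lemma mul_mul_eq_smul_sub_of_add_eq {s : ℝ} (h : x * y + y * x = s • 1) (z : A) :
    y * (x * z) = s • z - x * (y * z) := by
  rw [← mul_assoc, mul_eq_smul_one_sub_of_add_eq h, sub_mul, smul_one_mul, mul_assoc]

end Anticommutation

section Wedge

variable {a b d x y : Cl}

lemma w2_sub_sub (a b d : Cl) : w2 (a - b) (b - d) = w2 b d - w2 a d + w2 a b := by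
  simp only [w2, sub_mul, mul_sub]
  module

lemma w3_sub_sub (a b d : Cl) : w3 a (a - b) (b - d) = w3 a b d := by
  simp only [w3, sub_mul, mul_sub, mul_assoc]
  module

lemma vwB_add_left (u v B : Cl) : vwB (u + v) B = vwB u B + vwB v B := by
  simp only [vwB, add_mul, mul_add]
  module

lemma vwB_smul_left (t : ℝ) (v B : Cl) : vwB (t • v) B = t • vwB v B := by
  simp only [vwB, smul_mul_assoc, mul_smul_comm]
  module

lemma vwB_w2 {s t : ℝ} (hb : a * b + b * a = s • 1) (hd : a * d + d * a = t • 1) :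
    vwB a (w2 b d) = w3 a b d := by
  simp only [vwB, w2, w3, mul_assoc, mul_sub, sub_mul, mul_smul_comm, smul_mul_assoc,
    mul_mul_eq_smul_sub_of_add_eq hb, mul_mul_eq_smul_sub_of_add_eq hd,
    mul_eq_smul_one_sub_of_add_eq hb, mul_eq_smul_one_sub_of_add_eq hd, mul_one, one_mul]
  module

lemma mul_eq_lcontr_add_vwB (v B : Cl) : v * B = lcontr v B + vwB v B := by
  simp only [lcontr, vwB]
  module

lemma lcontr_w2 {s t : ℝ} (hb : a * b + b * a = (2 * s) • 1) (hd : a * d + d * a = (2 * t) • 1) :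
    lcontr a (w2 b d) = s • d - t • b := by
  simp only [lcontr, w2, mul_assoc, mul_sub, sub_mul, mul_smul_comm, smul_mul_assoc,
    mul_mul_eq_smul_sub_of_add_eq hb, mul_mul_eq_smul_sub_of_add_eq hd,
    mul_eq_smul_one_sub_of_add_eq hb, mul_eq_smul_one_sub_of_add_eq hd, mul_one]
  module

lemma mul_w3_add_w3_mul {s t u : ℝ} (ha : x * a + a * x = (2 * s) • 1)
    (hb : x * b + b * x = (2 * t) • 1) (hd : x * d + d * x = (2 * u) • 1) :
    x * w3 a b d + w3 a b d * x = (2 : ℝ) • (s • w2 b d - t • w2 a d + u • w2 a b) := by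
  simp only [w3, w2, mul_assoc, mul_sub, sub_mul, add_mul, mul_add, mul_smul_comm,
    smul_mul_assoc, mul_mul_eq_smul_sub_of_add_eq ha, mul_mul_eq_smul_sub_of_add_eq hb,
    mul_mul_eq_smul_sub_of_add_eq hd, mul_eq_smul_one_sub_of_add_eq ha,
    mul_eq_smul_one_sub_of_add_eq hb, mul_eq_smul_one_sub_of_add_eq hd, mul_one]
  module

lemma commute_w2 (ha : x * a + a * x = 0) (hb : x * b + b * x = 0) : Commute (w2 a b) x := by
  simp only [Commute, SemiconjBy, w2, mul_assoc, mul_sub, sub_mul, mul_smul_comm, smul_mul_assoc,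
    mul_mul_eq_neg_of_add_eq_zero ha, mul_mul_eq_neg_of_add_eq_zero hb,
    mul_eq_neg_of_add_eq_zero ha, mul_eq_neg_of_add_eq_zero hb, mul_neg, neg_neg]

lemma w3_add_smul_add (l₁ l₂ l₃ : ℝ)
    (hxa : x * a + a * x = 0) (hxb : x * b + b * x = 0) (hxd : x * d + d * x = 0)
    (hya : y * a + a * y = 0) (hyb : y * b + b * y = 0) (hyd : y * d + d * y = 0) :
    w3 (a + l₁ • x + y) (b + l₂ • x + y) (d + l₃ • x + y) =
      w3 a b d + (l₁ • w2 b d - l₂ • w2 a d + l₃ • w2 a b) * x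
        + (w2 b d - w2 a d + w2 a b) * y
        + ((l₂ - l₃) • a + (l₃ - l₁) • b + (l₁ - l₂) • d) * w2 x y := by
  simp only [w3, w2, mul_assoc, add_mul, mul_add, sub_mul, mul_sub, mul_smul_comm,
    smul_mul_assoc, mul_mul_eq_neg_of_add_eq_zero hxa, mul_mul_eq_neg_of_add_eq_zero hxb,
    mul_mul_eq_neg_of_add_eq_zero hxd, mul_mul_eq_neg_of_add_eq_zero hya,
    mul_mul_eq_neg_of_add_eq_zero hyb, mul_mul_eq_neg_of_add_eq_zero hyd,
    mul_eq_neg_of_add_eq_zero hxa, mul_eq_neg_of_add_eq_zero hxb, mul_eq_neg_of_add_eq_zero hxd,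
    mul_eq_neg_of_add_eq_zero hya, mul_eq_neg_of_add_eq_zero hyb, mul_eq_neg_of_add_eq_zero hyd,
    mul_neg, neg_mul, neg_neg]
  module

end Wedge

lemma nInf_mul_Nb : nInf * Nb = nInf := by
  have hnm : nOri * nInf + nInf * nOri = (-2 : ℝ) • 1 := by
    rw [add_comm]; exact nInf_mul_nOri_add_swap
  rw [Nb, w2, mul_smul_comm, mul_sub, ← mul_assoc nInf nInf, nInf_mul_self, zero_mul,
    mul_mul_eq_smul_sub_of_add_eq hnm, nInf_mul_self, mul_zero]
  module

lemma nOri_mul_Nb : nOri * Nb = -nOri := by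
  rw [Nb, w2, mul_smul_comm, mul_sub, ← mul_assoc nOri nOri, nOri_mul_self, zero_mul,
    mul_mul_eq_smul_sub_of_add_eq nInf_mul_nOri_add_swap, nOri_mul_self, mul_zero]
  module

lemma half_inner_self_add_smul {F : Type*} [NormedAddCommGroup F] [InnerProductSpace ℝ F]
    (c u : F) (r : ℝ) (hu : ‖u‖ = 1) :
    ⟪c + r • u, c + r • u⟫ / 2 = ⟪c, c + r • u⟫ + (r ^ 2 - ⟪c, c⟫) / 2 := by
  simp only [inner_add_left, inner_add_right, real_inner_smul_left, real_inner_smul_right,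
    real_inner_self_eq_norm_sq u, hu, real_inner_comm c u]
  ring

lemma vwB_ev_w2_sub_sub (p₁ p₂ p₃ : E3) :
    vwB (ev p₁) (w2 (ev (p₁ - p₂)) (ev (p₂ - p₃))) = w3 (ev p₁) (ev p₂) (ev p₃) := by
  rw [vwB_w2 (ev_mul_ev_add_swap _ _) (ev_mul_ev_add_swap _ _), ev_sub, ev_sub, w3_sub_sub]

lemma w3_cpt_of_plane_through_origin (p₁ p₂ p₃ c : E3) (k : ℝ)
    (hα₁ : ⟪p₁, p₁⟫ / 2 = ⟪c, p₁⟫ + k) (hα₂ : ⟪p₂, p₂⟫ / 2 = ⟪c, p₂⟫ + k)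
    (hα₃ : ⟪p₃, p₃⟫ / 2 = ⟪c, p₃⟫ + k)
    (hflat : w3 (ev p₁) (ev p₂) (ev p₃) = 0)
    (hc : vwB (ev c) (w2 (ev (p₁ - p₂)) (ev (p₂ - p₃))) = 0) :
    w3 (cpt p₁) (cpt p₂) (cpt p₃) =
      k • w2 (ev (p₁ - p₂)) (ev (p₂ - p₃)) * nInf + w2 (ev (p₁ - p₂)) (ev (p₂ - p₃)) * nOri
        - ev c * w2 (ev (p₁ - p₂)) (ev (p₂ - p₃)) * Nb := by
  have hcontr : ⟪c, p₁⟫ • w2 (ev p₂) (ev p₃) - ⟪c, p₂⟫ • w2 (ev p₁) (ev p₃)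
      + ⟪c, p₃⟫ • w2 (ev p₁) (ev p₂) = 0 := by
    have h := mul_w3_add_w3_mul (ev_mul_ev_add_swap c p₁) (ev_mul_ev_add_swap c p₂)
      (ev_mul_ev_add_swap c p₃)
    rw [hflat, mul_zero, zero_mul, add_zero] at h
    exact (smul_eq_zero.mp h.symm).resolve_left two_ne_zero
  have hcI : ev c * w2 (ev (p₁ - p₂)) (ev (p₂ - p₃))
      = ⟪c, p₁ - p₂⟫ • ev (p₂ - p₃) - ⟪c, p₂ - p₃⟫ • ev (p₁ - p₂) := by
    rw [mul_eq_lcontr_add_vwB, hc, add_zero,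
      lcontr_w2 (ev_mul_ev_add_swap _ _) (ev_mul_ev_add_swap _ _)]
  have hcontr_n := congrArg (· * nInf) hcontr
  simp only [add_mul, sub_mul, smul_mul_assoc, zero_mul] at hcontr_n
  rw [hcI, cpt_eq, cpt_eq, cpt_eq,
    w3_add_smul_add _ _ _ (nInf_mul_ev_add_swap _) (nInf_mul_ev_add_swap _)
      (nInf_mul_ev_add_swap _) (nOri_mul_ev_add_swap _) (nOri_mul_ev_add_swap _)
      (nOri_mul_ev_add_swap _),
    hflat, hα₁, hα₂, hα₃, show w2 nInf nOri = Nb from rfl, ev_sub, ev_sub, w2_sub_sub]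
  simp only [inner_sub_right, add_mul, sub_mul, smul_mul_assoc]
  linear_combination (norm := module) hcontr_n

lemma neg_cpt_sub_mul_w2_mul_Nb (c a b : E3) (ρ : ℝ) :
    -((cpt c - (2 : ℝ)⁻¹ • (ρ • nInf)) * w2 (ev a) (ev b) * Nb) =
      ((ρ - ⟪c, c⟫) / 2) • w2 (ev a) (ev b) * nInf + w2 (ev a) (ev b) * nOri
        - ev c * w2 (ev a) (ev b) * Nb := by
  have hn : Commute nInf (w2 (ev a) (ev b)) :=
    (commute_w2 (nInf_mul_ev_add_swap a) (nInf_mul_ev_add_swap b)).symm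
  have hm : Commute nOri (w2 (ev a) (ev b)) :=
    (commute_w2 (nOri_mul_ev_add_swap a) (nOri_mul_ev_add_swap b)).symm
  simp only [cpt_eq, sub_mul, add_mul, smul_mul_assoc, mul_assoc, hn.left_comm, hm.left_comm,
    nInf_mul_Nb, nOri_mul_Nb, mul_neg]
  module

theorem circle_trivector_origin_plane_general
    (c : E3) (r : ℝ)
    (r₁ r₂ r₃ : E3) (h₁ : ‖r₁‖ = 1) (h₂ : ‖r₂‖ = 1) (h₃ : ‖r₃‖ = 1)
    (p₁ p₂ p₃ : E3)
    (hp₁ : p₁ = c + r • r₁) (hp₂ : p₂ = c + r • r₂) (hp₃ : p₃ = c + r • r₃)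
    (Ic : Cl) (hIc : Ic = w2 (ev (p₁ - p₂)) (ev (p₂ - p₃)))
    (hin₁ : vwB (ev r₁) Ic = 0)
    (hco : vwB (ev c) Ic = 0) :
    w3 (cpt p₁) (cpt p₂) (cpt p₃) =
      -((cpt c - (2:ℝ)⁻¹ • (r ^ 2 • nInf)) * Ic * Nb) := by
  subst hIc
  have hflat : w3 (ev p₁) (ev p₂) (ev p₃) = 0 := by
    rw [← vwB_ev_w2_sub_sub]
    nth_rewrite 1 [hp₁]
    rw [ev_add, ev_smul, vwB_add_left, vwB_smul_left, hco, hin₁, smul_zero, add_zero]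
  have hsphere : ∀ {p u : E3}, ‖u‖ = 1 → p = c + r • u →
      ⟪p, p⟫ / 2 = ⟪c, p⟫ + (r ^ 2 - ⟪c, c⟫) / 2 := by
    rintro p u hu rfl
    exact half_inner_self_add_smul c u r hu
  rw [w3_cpt_of_plane_through_origin p₁ p₂ p₃ c _ (hsphere h₁ hp₁) (hsphere h₂ hp₂)
    (hsphere h₃ hp₃) hflat hco, neg_cpt_sub_mul_w2_mul_Nb]

/-- if the circle plane contains the origin (c ∧ I_c = 0), then
V₃ = −(C − (1/2)r²n) I_c N. -/
theorem circle_trivector_origin_plane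
    (c : E3) (r : ℝ) (hr : 0 < r)
    (r₁ r₂ r₃ : E3) (h₁ : ‖r₁‖ = 1) (h₂ : ‖r₂‖ = 1) (h₃ : ‖r₃‖ = 1)
    (p₁ p₂ p₃ : E3)
    (hp₁ : p₁ = c + r • r₁) (hp₂ : p₂ = c + r • r₂) (hp₃ : p₃ = c + r • r₃)
    (Ic : Cl) (hIc : Ic = w2 (ev (p₁ - p₂)) (ev (p₂ - p₃)))
    (hin₁ : vwB (ev r₁) Ic = 0) (hin₂ : vwB (ev r₂) Ic = 0)
    (hin₃ : vwB (ev r₃) Ic = 0)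
    (hco : vwB (ev c) Ic = 0) :
    w3 (cpt p₁) (cpt p₂) (cpt p₃) =
      -((cpt c - (2:ℝ)⁻¹ • (r ^ 2 • nInf)) * Ic * Nb) :=
  circle_trivector_origin_plane_general c r r₁ r₂ r₃ h₁ h₂ h₃ p₁ p₂ p₃ hp₁ hp₂ hp₃ Ic hIc hin₁ hco
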